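/- Let 1 < p < ∞ and q with 1/p + 1/q = 1, and let ω : [0,1] → [0,∞) be integrable with ∫₀¹ t^{-n/p} ω(t) dt < ∞. Then for all f ∈ L^p(ℝⁿ) and g ∈ L^q(ℝⁿ), the duality identity ∫_{ℝⁿ} g(x) H_ω f(x) dx = ∫_{ℝⁿ} f(x) G_ω g(x) dx holds, where H_ω f(x) = ∫₀¹ f(tx) ω(t) dt and G_ω g(x) = ∫₀¹ g(x/t) t^{-n} ω(t) dt. -/

import Mathlib

/-!
Both sides are the iterated integral of `ω t • g x * f (t x)` over `(0,1) × ℝⁿ`, taken in the two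
orders after substituting `y = t x` in the inner `x`-integral, which produces the factor `t⁻ⁿ`.
Fubini applies because `‖f (t ·)‖_p = t^{-n/p} ‖f‖_p`, so by Hölder the `x`-integral of
`|ω t g x f (t x)|` is at most `t^{-n/p} |ω t| ‖g‖_q ‖f‖_p`, which is integrable in `t`.
-/

open MeasureTheory Set Function Module
open scoped ENNReal

lemma integrable_uncurry_of_lintegral_eLpNorm_lt_top {α β F : Type*} [MeasurableSpace α]
    [MeasurableSpace β] [NormedAddCommGroup F] {ν : Measure α} {μ : Measure β} [SFinite μ]
    {K : α → β → F} (hK : AEStronglyMeasurable (uncurry K) (ν.prod μ))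
    (h : ∫⁻ a, eLpNorm (K a) 1 μ ∂ν < ∞) : Integrable (uncurry K) (ν.prod μ) := by
  refine ⟨hK, ?_⟩
  rw [hasFiniteIntegral_iff_enorm, lintegral_prod _ hK.enorm]
  simpa only [uncurry_apply_pair, eLpNorm_one_eq_lintegral_enorm] using h

section Dilation

variable {E F : Type*} [NormedAddCommGroup E] [NormedSpace ℝ E] [MeasurableSpace E]
  [BorelSpace E] [FiniteDimensional ℝ E] (μ : Measure E) [μ.IsAddHaarMeasure]
  [NormedAddCommGroup F]

lemma eLpNorm_comp_smul (f : E → F) {t : ℝ} (ht : t ≠ 0) (p : ℝ≥0∞) :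
    eLpNorm (fun x => f (t • x)) p μ =
      ENNReal.ofReal (|t| ^ (-(finrank ℝ E : ℝ) / p.toReal)) * eLpNorm f p μ := by
  have hc : ENNReal.ofReal |(t ^ finrank ℝ E)⁻¹| ≠ 0 :=
    (ENNReal.ofReal_pos.2 (abs_pos.2 (inv_ne_zero (pow_ne_zero _ ht)))).ne'
  rw [← comp_def, ← (measurableEmbedding_const_smul₀ ht).eLpNorm_map_measure,
    Measure.map_addHaar_smul μ ht, eLpNorm_smul_measure_of_ne_zero hc, smul_eq_mul,
    ENNReal.ofReal_rpow_of_nonneg (abs_nonneg _) ENNReal.toReal_nonneg]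
  congr 2
  rw [abs_inv, abs_pow, ← Real.rpow_natCast, ← Real.rpow_neg (abs_nonneg t),
    ← Real.rpow_mul (abs_nonneg t), one_div, ENNReal.toReal_inv, div_eq_mul_inv]

variable [NormedSpace ℝ F]

lemma integral_smul_comp_inv_smul (G : E → F) {t : ℝ} (ht : t ≠ 0) :
    ∫ y, |t ^ finrank ℝ E|⁻¹ • G (t⁻¹ • y) ∂μ = ∫ x, G x ∂μ := by
  rw [integral_smul, Measure.integral_comp_smul, smul_smul, inv_pow, inv_inv,
    inv_mul_cancel₀ (abs_pos.2 (pow_ne_zero _ ht)).ne', one_smul]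

lemma quasiMeasurePreserving_prodMk_smul {α : Type*} [MeasurableSpace α] {ν : Measure α}
    [SFinite ν] {c : α → ℝ} (hc : Measurable c) (hc0 : ∀ᵐ a ∂ν, c a ≠ 0) :
    Measure.QuasiMeasurePreserving (fun z : α × E => (z.1, c z.1 • z.2))
      (ν.prod μ) (ν.prod μ) := by
  have hm : Measurable fun z : α × E => (z.1, c z.1 • z.2) := by fun_prop
  refine ⟨hm, Measure.AbsolutelyContinuous.mk fun s hs hs0 => ?_⟩
  rw [Measure.measure_prod_null hs] at hs0
  rw [Measure.map_apply hm hs, Measure.measure_prod_null (hm hs)]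
  filter_upwards [hs0, hc0] with a ha hca
  change μ ((c a • ·) ⁻¹' (Prod.mk a ⁻¹' s)) = 0
  rw [Measure.addHaar_preimage_smul μ hca, ha, Pi.zero_apply, mul_zero]

theorem integral_integral_eq_integral_integral_smul_inv {ν : Measure ℝ} [SFinite ν]
    (hν : ∀ᵐ t ∂ν, t ≠ 0) {K : ℝ → E → F} (hK : Integrable (uncurry K) (ν.prod μ)) :
    ∫ x, ∫ t, K t x ∂ν ∂μ = ∫ y, ∫ t, |t ^ finrank ℝ E|⁻¹ • K t (t⁻¹ • y) ∂ν ∂μ := by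
  set K' : ℝ → E → F := fun t y => |t ^ finrank ℝ E|⁻¹ • K t (t⁻¹ • y)
  have hν' : ∀ᵐ t ∂ν, t⁻¹ ≠ 0 := by filter_upwards [hν] with t ht using inv_ne_zero ht
  have hK'm : AEStronglyMeasurable (uncurry K') (ν.prod μ) :=
    (by fun_prop : Measurable fun z : ℝ × E => |z.1 ^ finrank ℝ E|⁻¹).aestronglyMeasurable.smul
      (hK.1.comp_quasiMeasurePreserving (quasiMeasurePreserving_prodMk_smul μ measurable_inv hν'))
  have hK' : Integrable (uncurry K') (ν.prod μ) := by
    refine (integrable_prod_iff hK'm).2 ⟨?_, hK.integral_norm_prod_left.congr ?_⟩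
    · filter_upwards [hν, hK.prod_right_ae] with t ht hKt
      exact (hKt.comp_smul (inv_ne_zero ht)).smul |t ^ finrank ℝ E|⁻¹
    · filter_upwards [hν] with t ht
      simp only [uncurry_apply_pair, K', norm_smul, norm_inv, Real.norm_eq_abs, abs_abs]
      exact (integral_smul_comp_inv_smul μ (fun x => ‖K t x‖) ht).symm
  calc ∫ x, ∫ t, K t x ∂ν ∂μ = ∫ t, ∫ x, K t x ∂μ ∂ν := (integral_integral_swap hK).symm
    _ = ∫ t, ∫ y, K' t y ∂μ ∂ν := integral_congr_ae <| by
      filter_upwards [hν] with t ht using (integral_smul_comp_inv_smul μ (K t) ht).symm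
    _ = ∫ y, ∫ t, K' t y ∂ν ∂μ := integral_integral_swap hK'

end Dilation

section Holder

variable {E 𝕜 : Type*} [NormedAddCommGroup E] [NormedSpace ℝ E] [MeasurableSpace E]
  [BorelSpace E] [FiniteDimensional ℝ E] {μ : Measure E} [μ.IsAddHaarMeasure]
  [NormedRing 𝕜] [NormedAlgebra ℝ 𝕜] {p q : ℝ} {f g : E → 𝕜}

lemma eLpNorm_smul_mul_comp_smul_le (hpq : p.HolderConjugate q) (hf : AEStronglyMeasurable f μ)
    (hg : AEStronglyMeasurable g μ) (c : ℝ) {t : ℝ} (ht : 0 < t) :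
    eLpNorm (fun x => c • (g x * f (t • x))) 1 μ ≤
      ‖t ^ (-(finrank ℝ E : ℝ) / p) * c‖ₑ *
        (eLpNorm g (ENNReal.ofReal q) μ * eLpNorm f (ENNReal.ofReal p) μ) := by
  have := hpq.symm.ennrealOfReal
  have hft : AEStronglyMeasurable (fun x => f (t • x)) μ :=
    hf.comp_quasiMeasurePreserving (Measure.quasiMeasurePreserving_smul μ ht.ne')
  calc eLpNorm (fun x => c • (g x * f (t • x))) 1 μ
        = ‖c‖ₑ * eLpNorm (fun x => g x * f (t • x)) 1 μ := eLpNorm_const_smul c _ 1 μ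
    _ ≤ ‖c‖ₑ * (eLpNorm g (ENNReal.ofReal q) μ *
          eLpNorm (fun x => f (t • x)) (ENNReal.ofReal p) μ) := by
        gcongr
        simpa using eLpNorm_le_eLpNorm_mul_eLpNorm'_of_norm hg hft (· * ·) 1
          (.of_forall fun x => by simpa using norm_mul_le _ _)
    _ = _ := by
        rw [eLpNorm_comp_smul μ f ht.ne', ENNReal.toReal_ofReal hpq.nonneg, abs_of_pos ht,
          enorm_mul, Real.enorm_of_nonneg (Real.rpow_nonneg ht.le (-(finrank ℝ E : ℝ) / p))]
        ring

lemma integrable_uncurry_smul_mul_comp_smul (hpq : p.HolderConjugate q) {ν : Measure ℝ} [SFinite ν]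
    (hν : ∀ᵐ t ∂ν, 0 < t) {ω : ℝ → ℝ} (hω : Measurable ω)
    (hA : Integrable (fun t => t ^ (-(finrank ℝ E : ℝ) / p) * ω t) ν)
    (hf : MemLp f (ENNReal.ofReal p) μ) (hg : MemLp g (ENNReal.ofReal q) μ) :
    Integrable (uncurry fun t x => ω t • (g x * f (t • x))) (ν.prod μ) := by
  have hm : AEStronglyMeasurable (uncurry fun t x => ω t • (g x * f (t • x))) (ν.prod μ) := by
    have hft : AEStronglyMeasurable (fun z : ℝ × E => f (z.1 • z.2)) (ν.prod μ) :=
      hf.1.comp_snd.comp_quasiMeasurePreserving (quasiMeasurePreserving_prodMk_smul μ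
        measurable_id (by filter_upwards [hν] with t ht using ht.ne'))
    exact (hω.comp measurable_fst).aestronglyMeasurable.smul (hg.1.comp_snd.mul hft)
  refine integrable_uncurry_of_lintegral_eLpNorm_lt_top hm ?_
  set C := eLpNorm g (ENNReal.ofReal q) μ * eLpNorm f (ENNReal.ofReal p) μ
  calc ∫⁻ t, eLpNorm (fun x => ω t • (g x * f (t • x))) 1 μ ∂ν
        ≤ ∫⁻ t, ‖t ^ (-(finrank ℝ E : ℝ) / p) * ω t‖ₑ * C ∂ν := lintegral_mono_ae <| by
          filter_upwards [hν] with t ht using eLpNorm_smul_mul_comp_smul_le hpq hf.1 hg.1 _ ht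
    _ = (∫⁻ t, ‖t ^ (-(finrank ℝ E : ℝ) / p) * ω t‖ₑ ∂ν) * C :=
          lintegral_mul_const' _ _ (ENNReal.mul_lt_top hg.2 hf.2).ne
    _ < ∞ := ENNReal.mul_lt_top hA.2 (ENNReal.mul_lt_top hg.2 hf.2)

end Holder

theorem hardy_cesaro_duality_general (n : ℕ) (p q : ℝ) (hp : 1 < p) (hpq : 1/p + 1/q = 1)
    (ω : ℝ → ℝ) (hωm : Measurable ω)
    (hA : IntegrableOn (fun t => t ^ (-(n:ℝ)/p) * ω t) (Ioo 0 1))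
    (f g : EuclideanSpace ℝ (Fin n) → ℂ)
    (hf : MemLp f (ENNReal.ofReal p) volume) (hg : MemLp g (ENNReal.ofReal q) volume) :
    ∫ x, g x * ∫ t in Ioo (0:ℝ) 1, ω t • f (t • x) =
      ∫ x, f x * ∫ t in Ioo (0:ℝ) 1, (ω t * t ^ (-(n:ℤ))) • g (t⁻¹ • x) := by
  have hpq' : p.HolderConjugate q :=
    Real.holderConjugate_iff.2 ⟨hp, by simpa only [one_div] using hpq⟩
  have hpos : ∀ᵐ t ∂(volume.restrict (Ioo (0:ℝ) 1)), 0 < t :=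
    ae_restrict_of_forall_mem measurableSet_Ioo fun t ht => ht.1
  have hK := integrable_uncurry_smul_mul_comp_smul hpq' hpos hωm
    (by rwa [finrank_euclideanSpace_fin]) hf hg
  calc ∫ x, g x * ∫ t in Ioo (0:ℝ) 1, ω t • f (t • x)
      = ∫ x, ∫ t in Ioo (0:ℝ) 1, ω t • (g x * f (t • x)) := by
        simp_rw [← integral_const_mul, mul_smul_comm]
    _ = ∫ y, ∫ t in Ioo (0:ℝ) 1, |t ^ n|⁻¹ • ω t • (g (t⁻¹ • y) * f (t • t⁻¹ • y)) := by
        rw [integral_integral_eq_integral_integral_smul_inv volume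
          (hpos.mono fun t ht => ht.ne') hK, finrank_euclideanSpace_fin]
    _ = _ := by
        congr 1 with y
        rw [← integral_const_mul]
        refine setIntegral_congr_fun measurableSet_Ioo fun t ht => ?_
        rw [smul_inv_smul₀ ht.1.ne', abs_of_pos (pow_pos ht.1 n), zpow_neg, zpow_natCast]
        simp only [Complex.real_smul]
        push_cast
        ring

/-- Duality (4.1): `∫ g · H_ω f = ∫ f · G_ω g` for `f ∈ L^p`, `g ∈ L^q`, `1/p + 1/q = 1`,
where `H_ω f(x) = ∫₀¹ f(tx) ω(t) dt` and `G_ω g(x) = ∫₀¹ g(x/t) t^{-n} ω(t) dt`. -/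
theorem hardy_cesaro_duality (n : ℕ) (p q : ℝ) (hp : 1 < p) (hpq : 1/p + 1/q = 1)
    (ω : ℝ → ℝ) (hωm : Measurable ω) (hωnn : ∀ t ∈ Icc (0:ℝ) 1, 0 ≤ ω t)
    (hωint : IntegrableOn ω (Icc (0:ℝ) 1))
    (hA : IntegrableOn (fun t => t ^ (-(n:ℝ)/p) * ω t) (Ioo 0 1))
    (f g : EuclideanSpace ℝ (Fin n) → ℂ)
    (hf : MemLp f (ENNReal.ofReal p) volume) (hg : MemLp g (ENNReal.ofReal q) volume) :
    ∫ x, g x * ∫ t in Ioo (0:ℝ) 1, ω t • f (t • x) =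
      ∫ x, f x * ∫ t in Ioo (0:ℝ) 1, (ω t * t ^ (-(n:ℤ))) • g (t⁻¹ • x) :=
  hardy_cesaro_duality_general n p q hp hpq ω hωm hA f g hf hg
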